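/- arXiv:2306.16362 — 2 statements merged into one kernel-verified Lean document; each statement's English description precedes it below -/
import Mathlib

section
/- The real function g(t) = sinh(a·t)·e^{t} is strictly decreasing on the interval (−∞, ξ_a] and maps (−∞, ξ_a] bijectively onto [x_a, 0), where ξ_a = (1/(2a))·ln((1−a)/(1+a)) and x_a = −(a/(1+a))·((1−a)/(1+a))^{(1−a)/(2a)}. (The inverse of this restriction is the real branch ψ₋₁ : [x_a, 0) → (−∞, ξ_a].) -/
/-!
Writing `g t = (exp ((1 + a) t) - exp ((1 - a) t)) / 2`, the derivative
`((1 + a) exp ((1 + a) t) - (1 - a) exp ((1 - a) t)) / 2` is negative exactly when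
`(1 + a) exp (2 a t) < 1 - a`, i.e. for `t < ξ_a`. Hence `g` is strictly decreasing on
`(-∞, ξ_a]`, and since `g → 0` at `-∞` the intermediate value theorem makes it a bijection onto
`[g ξ_a, 0)`; evaluating with `exp (c ξ_a) = r ^ (c / 2a)`, `r = (1 - a) / (1 + a)`, gives
`g ξ_a = x_a`.
-/

open Real Set Filter Topology

theorem StrictAntiOn.bijOn_Iic_Ico {α δ : Type*} [ConditionallyCompleteLinearOrder α]
    [TopologicalSpace α] [OrderTopology α] [DenselyOrdered α] [NoMinOrder α]
    [LinearOrder δ] [TopologicalSpace δ] [OrderClosedTopology δ]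
    {f : α → δ} {c : α} {L : δ} (hf : StrictAntiOn f (Iic c)) (hcont : ContinuousOn f (Iic c))
    (hlim : Tendsto f atBot (𝓝 L)) : BijOn f (Iic c) (Ico (f c) L) := by
  refine ⟨fun t ht => ⟨hf.antitoneOn ht self_mem_Iic ht, ?_⟩, hf.injOn, fun y hy => ?_⟩
  · obtain ⟨s, hs⟩ := exists_lt t
    have hs_le_L : f s ≤ L :=
      ge_of_tendsto hlim <| (eventually_le_atBot s).mono fun u hu =>
        hf.antitoneOn (hu.trans (hs.le.trans ht)) (hs.le.trans ht) hu
    exact (hf (hs.le.trans ht) ht hs).trans_le hs_le_L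
  · obtain ⟨t₀, hy_lt, ht₀⟩ :=
      ((hlim.eventually (eventually_gt_nhds hy.2)).and (eventually_le_atBot c)).exists
    obtain ⟨t, ht, rfl⟩ := intermediate_value_Icc' ht₀ (hcont.mono Icc_subset_Iic_self)
      ⟨hy.1, hy_lt.le⟩
    exact ⟨t, ht.2, rfl⟩

theorem sinh_mul_mul_exp (a t : ℝ) :
    sinh (a * t) * exp t = (exp ((1 + a) * t) - exp ((1 - a) * t)) / 2 := by
  rw [sinh_eq, div_mul_eq_mul_div, sub_mul, ← exp_add, ← exp_add]
  ring_nf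

theorem hasDerivAt_sinh_mul_mul_exp (a t : ℝ) :
    HasDerivAt (fun t => sinh (a * t) * exp t)
      (((1 + a) * exp ((1 + a) * t) - (1 - a) * exp ((1 - a) * t)) / 2) t := by
  simp only [sinh_mul_mul_exp]
  have hexp (b : ℝ) : HasDerivAt (fun t => exp (b * t)) (b * exp (b * t)) t := by
    simpa [mul_comm] using ((hasDerivAt_id t).const_mul b).exp
  exact ((hexp _).sub (hexp _)).div_const 2

theorem tendsto_sinh_mul_mul_exp_atBot {a : ℝ} (ha : |a| < 1) :
    Tendsto (fun t => sinh (a * t) * exp t) atBot (𝓝 0) := by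
  obtain ⟨ha0, ha1⟩ := abs_lt.1 ha
  have hexp {b : ℝ} (hb : 0 < b) : Tendsto (fun t => exp (b * t)) atBot (𝓝 0) :=
    tendsto_exp_atBot.comp (tendsto_id.const_mul_atBot hb)
  simpa [sinh_mul_mul_exp] using
    ((hexp (by linarith : 0 < 1 + a)).sub (hexp (by linarith : 0 < 1 - a))).div_const 2

theorem exp_mul_one_div_mul_log {r : ℝ} (hr : 0 < r) (b c : ℝ) :
    exp (c * ((1 / b) * log r)) = r ^ (c / b) := by
  rw [rpow_def_of_pos hr]
  ring_nf

section CriticalPoint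

variable {a : ℝ}

theorem sinh_mul_mul_exp_crit (ha : |a| < 1) (ha0 : a ≠ 0) :
    sinh (a * ((1 / (2 * a)) * log ((1 - a) / (1 + a)))) *
        exp ((1 / (2 * a)) * log ((1 - a) / (1 + a))) =
      -(a / (1 + a)) * ((1 - a) / (1 + a)) ^ ((1 - a) / (2 * a)) := by
  obtain ⟨ham, hap⟩ := abs_lt.1 ha
  have hr : 0 < (1 - a) / (1 + a) := div_pos (by linarith) (by linarith)
  have hsucc : (1 + a) / (2 * a) = (1 - a) / (2 * a) + 1 := by field_simp; ring
  rw [sinh_mul_mul_exp, exp_mul_one_div_mul_log hr, exp_mul_one_div_mul_log hr, hsucc,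
    rpow_add hr, rpow_one]
  have : 1 + a ≠ 0 := by linarith
  field_simp
  ring

theorem mul_exp_lt_of_lt_crit (ha0 : 0 < a) (ha1 : a < 1) {t : ℝ}
    (ht : t < (1 / (2 * a)) * log ((1 - a) / (1 + a))) :
    (1 + a) * exp ((1 + a) * t) < (1 - a) * exp ((1 - a) * t) := by
  have hr : 0 < (1 - a) / (1 + a) := div_pos (by linarith) (by linarith)
  have hlog : 2 * a * t < log ((1 - a) / (1 + a)) := by
    rw [mul_comm, ← lt_div_iff₀ (by positivity)]
    simpa [div_eq_inv_mul, mul_comm] using ht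
  have h2at : (1 + a) * exp (2 * a * t) < 1 - a := by
    rw [← lt_div_iff₀' (by linarith), ← exp_log hr]
    exact exp_lt_exp.2 hlog
  have hsplit : exp ((1 + a) * t) = exp (2 * a * t) * exp ((1 - a) * t) := by
    rw [← exp_add]; ring_nf
  rw [hsplit, ← mul_assoc]
  exact mul_lt_mul_of_pos_right h2at (exp_pos _)

theorem strictAntiOn_sinh_mul_mul_exp (ha0 : 0 < a) (ha1 : a < 1) :
    StrictAntiOn (fun t => sinh (a * t) * exp t)
      (Iic ((1 / (2 * a)) * log ((1 - a) / (1 + a)))) := by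
  refine strictAntiOn_of_hasDerivWithinAt_neg (convex_Iic _) (by fun_prop)
    (fun t _ => (hasDerivAt_sinh_mul_mul_exp a t).hasDerivWithinAt) fun t ht => ?_
  rw [interior_Iic] at ht
  linarith [mul_exp_lt_of_lt_crit ha0 ha1 ht]

end CriticalPoint

theorem stmt_7 (a : ℝ) (ha0 : 0 < a) (ha1 : a < 1)
    (g : ℝ → ℝ) (hg : ∀ t : ℝ, g t = Real.sinh (a * t) * Real.exp t)
    (ξa : ℝ) (hξa : ξa = (1 / (2 * a)) * Real.log ((1 - a) / (1 + a)))
    (xa : ℝ) (hxa : xa = -(a / (1 + a)) * ((1 - a) / (1 + a)) ^ ((1 - a) / (2 * a))) :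
    StrictAntiOn g (Set.Iic ξa) ∧ Set.BijOn g (Set.Iic ξa) (Set.Ico xa 0) := by
  obtain rfl : g = fun t => sinh (a * t) * exp t := funext hg
  have ha : |a| < 1 := abs_lt.2 ⟨by linarith, ha1⟩
  have hanti := strictAntiOn_sinh_mul_mul_exp ha0 ha1
  have hbij := hanti.bijOn_Iic_Ico (by fun_prop) (tendsto_sinh_mul_mul_exp_atBot ha)
  rw [sinh_mul_mul_exp_crit ha ha0.ne'] at hbij
  subst hξa hxa
  exact ⟨hanti, hbij⟩
end

section
/- Define Ω₀ ⊂ ℂ as the union of: the set of ξ + iη with 0 < η < π/(1+a) and e^{(1+a)ξ}·sin((1+a)η) > e^{(1−a)ξ}·sin((1−a)η); the set of real ξ with ξ > ξ_a; and the set of ξ + iη with −π/(1+a) < η < 0 and e^{(1+a)ξ}·sin((1+a)η) < e^{(1−a)ξ}·sin((1−a)η). For each k ∈ ℤ set Ω_k = Ω₀ + i·kπ/a. Then f restricted to Ω_k is a bijection onto the rotated slit plane exp(i·kπ·(1+a)/a)·(ℂ ∖ (−∞, x_a]) = {exp(i·kπ·(1+a)/a)·z : z ∈ ℂ, z ∉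 (−∞, x_a]}. -/
/-!
On the strip `0 < Im w < π / (1 + a)` the substitution `ζ = exp ((1 + a) w)` is a bijection onto
the upper half-plane `H`, and there `2 f(w) = ζ - ζ ^ l` with `l = (1 - a) / (1 + a)`. The map
`φ ζ = ζ - ζ ^ l` is injective on `H` since `Im φ' > 0` on the convex set `H`, and `φ(H) ⊇ H`:
`φ(H)` is open by the open mapping theorem, and since `φ` is proper with `Im φ ζ ≤ Im ζ`, the set
`φ(H) ∩ H` is also closed in the connected set `H`. Hence `f` maps the upper part of `Ω₀`
bijectively onto `H`; the lower part follows from `f (conj w) = conj (f w)`, and on the real axis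
`f` is increasing on `[ξ_a, ∞)` with `f ξ_a = x_a`. Finally `f (w + iπk/a) = e^{iπk(1+a)/a} f w`
moves `Ω₀` to `Ω_k`.
-/

open Complex Real Set Filter Function ComplexConjugate

theorem Set.BijOn.image_of_comm {α β α' β' : Type*} {f : α → β} {s : Set α} {t : Set β}
    (h : BijOn f s t) {g : α' → β'} {σ : α → α'} {τ : β → β'} (hτ : Injective τ)
    (hg : ∀ x, g (σ x) = τ (f x)) : BijOn g (σ '' s) (τ '' t) := by
  refine ⟨?_, ?_, ?_⟩
  · rintro _ ⟨x, hx, rfl⟩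
    exact ⟨f x, h.mapsTo hx, (hg x).symm⟩
  · rintro _ ⟨x, hx, rfl⟩ _ ⟨y, hy, rfl⟩ hxy
    rw [hg x, hg y] at hxy
    rw [h.injOn hx hy (hτ hxy)]
  · rintro _ ⟨y, hy, rfl⟩
    obtain ⟨x, hx, rfl⟩ := h.surjOn hy
    exact ⟨σ x, mem_image_of_mem σ hx, hg x⟩

theorem Set.BijOn.union_of_disjoint {α β : Type*} {f : α → β} {s₁ s₂ : Set α} {t₁ t₂ : Set β}
    (h₁ : BijOn f s₁ t₁) (h₂ : BijOn f s₂ t₂) (ht : Disjoint t₁ t₂) :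
    BijOn f (s₁ ∪ s₂) (t₁ ∪ t₂) :=
  h₁.union h₂ <| (injOn_union ((ht.preimage f).mono h₁.mapsTo h₂.mapsTo)).2
    ⟨h₁.injOn, h₂.injOn, fun _ hx _ hy => ht.ne_of_mem (h₁.mapsTo hx) (h₂.mapsTo hy)⟩

theorem StrictMonoOn.bijOn_Ioi {g : ℝ → ℝ} {ξ : ℝ} (hmono : StrictMonoOn g (Ici ξ))
    (hcont : ContinuousOn g (Ici ξ)) (htop : Tendsto g atTop atTop) :
    BijOn g (Ioi ξ) (Ioi (g ξ)) := by
  refine ⟨fun x hx => hmono self_mem_Ici (mem_Ici.2 (le_of_lt hx)) hx,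
    hmono.injOn.mono Ioi_subset_Ici_self, fun y hy => ?_⟩
  obtain ⟨M, hyM, hξM⟩ := ((htop.eventually_gt_atTop y).and (eventually_gt_atTop ξ)).exists
  obtain ⟨x, hx, rfl⟩ := intermediate_value_Ioo hξM.le (hcont.mono Icc_subset_Ici_self) ⟨hy, hyM⟩
  exact ⟨x, hx.1, rfl⟩

lemma Complex.image_ofReal_Ioi (x : ℝ) :
    ((↑) : ℝ → ℂ) '' Ioi x = {w | w.im = 0 ∧ x < w.re} := by
  ext w
  refine ⟨?_, fun ⟨h0, h⟩ => ⟨w.re, h, ext rfl h0.symm⟩⟩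
  rintro ⟨y, hy, rfl⟩
  exact ⟨ofReal_im y, hy⟩

/- Noshiro–Warschawski: along the segment from `w` to `z`, the real function
`t ↦ Im (f (w + t (z - w)) / (z - w))` has derivative `Im f' > 0`. -/
theorem Convex.injOn_of_hasDerivAt_of_im_pos {U : Set ℂ} (hU : Convex ℝ U) {f f' : ℂ → ℂ}
    (hf : ∀ z ∈ U, HasDerivAt f (f' z) z) (hf' : ∀ z ∈ U, 0 < (f' z).im) : InjOn f U := by
  intro w hw z hz hfwz
  by_contra hne
  set d := z - w
  have hd : d ≠ 0 := sub_ne_zero.2 (Ne.symm hne)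
  have hseg : ∀ t ∈ Icc (0 : ℝ) 1, w + t * d ∈ U := fun t ht => by
    simpa [d, Complex.real_smul] using hU.add_smul_sub_mem hw hz ht
  have hderiv : ∀ t ∈ Icc (0 : ℝ) 1,
      HasDerivAt (fun t : ℝ => (f (w + t * d) / d).im) (f' (w + t * d)).im t := by
    intro t ht
    have hline : HasDerivAt (fun t : ℝ => w + t * d) d t := by
      simpa using ((hasDerivAt_id (t : ℂ)).comp_ofReal.mul_const d).const_add w
    have h := imCLM.hasFDerivAt.comp_hasDerivAt t (((hf _ (hseg t ht)).comp t hline).div_const d)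
    rwa [mul_div_cancel_right₀ _ hd] at h
  have hmono : StrictMonoOn (fun t : ℝ => (f (w + t * d) / d).im) (Icc 0 1) :=
    strictMonoOn_of_hasDerivWithinAt_pos (convex_Icc 0 1)
      (fun t ht => (hderiv t ht).continuousAt.continuousWithinAt)
      (fun t ht => (hderiv t (interior_subset ht)).hasDerivWithinAt)
      (fun t ht => hf' _ (hseg t (interior_subset ht)))
  have := hmono (left_mem_Icc.2 zero_le_one) (right_mem_Icc.2 zero_le_one) zero_lt_one
  simp [d, hfwz] at this

theorem upperHalfPlane_subset_image {h : ℂ → ℂ} (hd : DifferentiableOn ℂ h {z | 0 < z.im})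
    (hinj : InjOn h {z | 0 < z.im}) (him : ∀ z : ℂ, 0 < z.im → (h z).im ≤ z.im)
    (hnorm : Tendsto (fun z => ‖h z‖) (cocompact ℂ) atTop)
    (hne : ∃ z : ℂ, 0 < z.im ∧ 0 < (h z).im) :
    {z : ℂ | 0 < z.im} ⊆ h '' {z | 0 < z.im} := by
  set H : Set ℂ := {z | 0 < z.im}
  have hHopen : IsOpen H := isOpen_lt continuous_const continuous_im
  have hHconn : IsPreconnected H := (convex_halfSpace_im_gt 0).isPreconnected
  have hI : I ∈ H := by simp [H]
  have h2I : 2 * I ∈ H := by simp [H]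
  have hopen : IsOpen (h '' H) := by
    rcases (hd.analyticOnNhd hHopen).is_constant_or_isOpen hHconn with ⟨w, hw⟩ | hop
    · have := hinj hI h2I (by rw [hw _ hI, hw _ h2I])
      exact absurd (congrArg im this) (by norm_num)
    · exact hop H subset_rfl hHopen
  obtain ⟨z₀, hz₀, hhz₀⟩ := hne
  refine hHconn.subset_of_closure_inter_subset hopen ⟨h z₀, hhz₀, z₀, hz₀, rfl⟩ ?_
  rintro y ⟨hy, hyH⟩
  obtain ⟨C, hC, hCc⟩ := mem_cocompact.1 (hnorm.eventually_gt_atTop (‖y‖ + 1))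
  -- Preimages of points near `y` stay in a compact subset of `H`, where `h` is continuous.
  set K := C ∩ {z : ℂ | y.im / 2 ≤ z.im}
  have hy2 : 0 < y.im / 2 := half_pos hyH
  have hKH : K ⊆ H := fun z hz => show 0 < z.im from hy2.trans_le hz.2
  have hK : IsCompact K := hC.inter_right (isClosed_le continuous_const continuous_im)
  have hyK : y ∈ closure (h '' K) := by
    refine Metric.mem_closure_iff.2 fun ε hε => ?_
    obtain ⟨_, ⟨z, hz, rfl⟩, hdist⟩ :=
      Metric.mem_closure_iff.1 hy (min ε (min 1 (y.im / 2))) (by positivity)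
    rw [Complex.dist_eq] at hdist
    have hzC : z ∈ C := by
      by_contra hzC
      have hfar : ‖y‖ + 1 < ‖h z‖ := hCc hzC
      have htri := norm_le_norm_add_norm_sub' (h z) y
      rw [norm_sub_rev] at htri
      linarith [min_le_left 1 (y.im / 2), min_le_right ε (min 1 (y.im / 2))]
    have hzim : y.im / 2 ≤ z.im := by
      have := (abs_im_le_norm (y - h z)).trans hdist.le
      rw [sub_im, abs_le] at this
      linarith [him z hz, min_le_right 1 (y.im / 2), min_le_right ε (min 1 (y.im / 2))]
    refine ⟨h z, ⟨z, ⟨hzC, hzim⟩, rfl⟩, ?_⟩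
    rw [Complex.dist_eq]
    exact hdist.trans_le (min_le_left _ _)
  obtain ⟨z, hz, rfl⟩ :=
    (hK.image_of_continuousOn (hd.continuousOn.mono hKH)).isClosed.closure_subset hyK
  exact ⟨z, hKH hz, rfl⟩

lemma Complex.arg_mem_Ioo_of_im_pos {z : ℂ} (hz : 0 < z.im) : arg z ∈ Ioo 0 π :=
  ⟨(arg_nonneg_iff.2 hz.le).lt_of_ne fun h => hz.ne' (arg_eq_zero_iff.1 h.symm).2,
    arg_lt_pi_iff.2 (Or.inr hz.ne')⟩

lemma Complex.im_cpow_ofReal_pos {z : ℂ} {l : ℝ} (hl0 : 0 < l) (hl1 : l ≤ 1) (hz : 0 < z.im) :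
    0 < (z ^ (l : ℂ)).im := by
  obtain ⟨h0, hπ⟩ := arg_mem_Ioo_of_im_pos hz
  have hz0 : z ≠ 0 := fun h => by simp [h] at hz
  rw [cpow_ofReal_im]
  exact mul_pos (by positivity) (Real.sin_pos_of_pos_of_lt_pi (by positivity) (by nlinarith))

lemma Complex.im_cpow_ofReal_neg {z : ℂ} {l : ℝ} (hl0 : -1 ≤ l) (hl1 : l < 0) (hz : 0 < z.im) :
    (z ^ (l : ℂ)).im < 0 := by
  obtain ⟨h0, hπ⟩ := arg_mem_Ioo_of_im_pos hz
  have hz0 : z ≠ 0 := fun h => by simp [h] at hz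
  rw [cpow_ofReal_im]
  exact mul_neg_of_pos_of_neg (by positivity)
    (Real.sin_neg_of_neg_of_neg_pi_lt (by nlinarith) (by nlinarith))

lemma bijOn_exp_mul_strip {c : ℝ} (hc : 0 < c) :
    BijOn (fun w : ℂ => exp (c * w)) {w | 0 < w.im ∧ w.im < π / c} {z | 0 < z.im} := by
  have him : ∀ w : ℂ, (c * w).im = c * w.im := by simp
  refine ⟨fun w ⟨h0, h1⟩ => ?_, fun w₁ ⟨h₁0, h₁1⟩ w₂ ⟨h₂0, h₂1⟩ heq => ?_, fun z hz => ?_⟩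
  · have := Real.sin_pos_of_pos_of_lt_pi (by rw [him]; positivity)
      (show (c * w).im < π by rw [him]; exact (lt_div_iff₀' hc).1 h1)
    simp only [mem_ofPred_eq, exp_im]
    positivity
  · have hsrc : ∀ w : ℂ, 0 < w.im → w.im < π / c → c * w ∈ expOpenPartialHomeomorph.source :=
      fun w h0 h1 => ⟨by rw [him]; nlinarith [pi_pos], by rw [him]; exact (lt_div_iff₀' hc).1 h1⟩
    exact mul_left_cancel₀ (ofReal_ne_zero.2 hc.ne')
      (expOpenPartialHomeomorph.injOn (hsrc _ h₁0 h₁1) (hsrc _ h₂0 h₂1) heq)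
  · obtain ⟨h0, h1⟩ := arg_mem_Ioo_of_im_pos hz
    refine ⟨log z / c, ⟨?_, ?_⟩, ?_⟩
    · rw [div_ofReal_im, log_im]; positivity
    · rw [div_ofReal_im, log_im]; exact div_lt_div_of_pos_right h1 hc
    · simp only
      rw [mul_div_cancel₀ _ (ofReal_ne_zero.2 hc.ne'), Complex.exp_log]
      rintro rfl; simp at hz

section SubCpow

variable {l : ℝ}

lemma hasDerivAt_sub_cpow {z : ℂ} (hz : z ∈ slitPlane) :
    HasDerivAt (fun z : ℂ => z - z ^ (l : ℂ)) (1 - l * z ^ ((l - 1 : ℝ) : ℂ)) z := by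
  have h := (hasDerivAt_id' z).sub (hasStrictDerivAt_cpow_const (c := (l : ℂ)) hz).hasDerivAt
  rwa [show (l : ℂ) - 1 = ((l - 1 : ℝ) : ℂ) by push_cast; rfl] at h

lemma injOn_sub_cpow (hl0 : 0 < l) (hl1 : l < 1) :
    InjOn (fun z : ℂ => z - z ^ (l : ℂ)) {z | 0 < z.im} :=
  (convex_halfSpace_im_gt 0).injOn_of_hasDerivAt_of_im_pos
    (fun z hz => hasDerivAt_sub_cpow (mem_slitPlane_iff.2 (Or.inr hz.ne')))
    fun z hz => by
      have := im_cpow_ofReal_neg (l := l - 1) (by linarith) (by linarith) hz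
      simp only [sub_im, one_im, mul_im, ofReal_re, ofReal_im, zero_mul, add_zero]
      nlinarith

lemma tendsto_norm_sub_cpow_cocompact (hl0 : 0 < l) (hl1 : l < 1) :
    Tendsto (fun z : ℂ => ‖z - z ^ (l : ℂ)‖) (cocompact ℂ) atTop := by
  have hreal : Tendsto (fun r : ℝ => r - r ^ l) atTop atTop := by
    refine ((tendsto_rpow_atTop hl0).atTop_mul_atTop₀ (tendsto_atTop_add_const_right _ (-1)
      (tendsto_rpow_atTop (sub_pos.2 hl1)))).congr' ?_
    filter_upwards [eventually_gt_atTop 0] with r hr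
    rw [mul_add, ← rpow_add hr, add_sub_cancel, rpow_one, mul_neg_one, sub_eq_neg_add, add_comm]
  refine tendsto_atTop_mono (fun z => ?_) (hreal.comp tendsto_norm_cocompact_atTop)
  simpa [norm_cpow_real] using norm_sub_norm_le z (z ^ (l : ℂ))

lemma upperHalfPlane_subset_image_sub_cpow (hl0 : 0 < l) (hl1 : l < 1) :
    {z : ℂ | 0 < z.im} ⊆ (fun z : ℂ => z - z ^ (l : ℂ)) '' {z | 0 < z.im} := by
  refine upperHalfPlane_subset_image
    (fun z hz => (hasDerivAt_sub_cpow (mem_slitPlane_iff.2 (Or.inr (ne_of_gt hz))))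
      |>.differentiableAt.differentiableWithinAt)
    (injOn_sub_cpow hl0 hl1)
    (fun z hz => by simpa using (im_cpow_ofReal_pos hl0 hl1.le hz).le)
    (tendsto_norm_sub_cpow_cocompact hl0 hl1) ⟨2 * I, by simp, ?_⟩
  have hnorm : ‖(2 * I) ^ (l : ℂ)‖ = 2 ^ l := by simp [norm_cpow_real]
  have hlt : (2 : ℝ) ^ l < 2 := by
    simpa using Real.rpow_lt_rpow_of_exponent_lt (by norm_num : (1 : ℝ) < 2) hl1
  have := (im_le_norm ((2 * I) ^ (l : ℂ))).trans_eq hnorm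
  simp only [sub_im, mul_im, I_im, I_re, re_ofNat, im_ofNat]
  linarith

end SubCpow

noncomputable def sinhMulExp (a : ℝ) (w : ℂ) : ℂ := sinh (a * w) * exp w

noncomputable def sinhMulExpReal (a x : ℝ) : ℝ := Real.sinh (a * x) * Real.exp x

section SinhMulExp

variable (a : ℝ)

lemma sinhMulExp_eq (w : ℂ) :
    sinhMulExp a w = (exp ((1 + a) * w) - exp ((1 - a) * w)) / 2 := by
  rw [sinhMulExp, Complex.sinh, show (1 + a : ℂ) * w = a * w + w by ring,
    show (1 - a : ℂ) * w = -(a * w) + w by ring, Complex.exp_add, Complex.exp_add]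
  ring

lemma im_sinhMulExp (w : ℂ) :
    (sinhMulExp a w).im = (Real.exp ((1 + a) * w.re) * Real.sin ((1 + a) * w.im) -
      Real.exp ((1 - a) * w.re) * Real.sin ((1 - a) * w.im)) / 2 := by
  simp [sinhMulExp_eq, exp_im, sub_div]

lemma im_sinhMulExp_pos_iff (w : ℂ) : 0 < (sinhMulExp a w).im ↔
    Real.exp ((1 - a) * w.re) * Real.sin ((1 - a) * w.im) <
      Real.exp ((1 + a) * w.re) * Real.sin ((1 + a) * w.im) := by
  rw [im_sinhMulExp]; constructor <;> intro h <;> linarith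

lemma im_sinhMulExp_neg_iff (w : ℂ) : (sinhMulExp a w).im < 0 ↔
    Real.exp ((1 + a) * w.re) * Real.sin ((1 + a) * w.im) <
      Real.exp ((1 - a) * w.re) * Real.sin ((1 - a) * w.im) := by
  rw [im_sinhMulExp]; constructor <;> intro h <;> linarith

lemma sinhMulExp_conj (w : ℂ) : sinhMulExp a (conj w) = conj (sinhMulExp a w) := by
  simp [sinhMulExp, ← sinh_conj, ← exp_conj]

lemma ofReal_sinhMulExpReal (x : ℝ) : (sinhMulExpReal a x : ℂ) = sinhMulExp a x := by
  simp [sinhMulExpReal, sinhMulExp]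

lemma sinhMulExpReal_eq (x : ℝ) :
    sinhMulExpReal a x = (Real.exp ((1 + a) * x) - Real.exp ((1 - a) * x)) / 2 := by
  exact_mod_cast (ofReal_sinhMulExpReal a x).trans (sinhMulExp_eq a x)

lemma hasDerivAt_sinhMulExpReal (x : ℝ) :
    HasDerivAt (sinhMulExpReal a)
      (((1 + a) * Real.exp ((1 + a) * x) - (1 - a) * Real.exp ((1 - a) * x)) / 2) x := by
  rw [funext (sinhMulExpReal_eq a)]
  have h := (((hasDerivAt_id x).const_mul (1 + a)).exp.sub
    ((hasDerivAt_id x).const_mul (1 - a)).exp).div_const 2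
  exact h.congr_deriv (by simp only [id, mul_one]; ring)

variable {a}

lemma sinhMulExp_add_I_mul (ha : a ≠ 0) (k : ℤ) (w : ℂ) :
    sinhMulExp a (w + I * (k * π / a)) = exp (I * (k * π * (1 + a) / a)) * sinhMulExp a w := by
  have ha' : (a : ℂ) ≠ 0 := ofReal_ne_zero.2 ha
  have hshift : exp ((1 - a) * (I * (k * π / a))) = exp ((1 + a) * (I * (k * π / a))) := by
    rw [show (1 - a : ℂ) * (I * (k * π / a)) = (1 + a) * (I * (k * π / a)) + -(k * (2 * π * I))
      by field_simp; ring, Complex.exp_add, Complex.exp_neg, exp_int_mul_two_pi_mul_I, inv_one,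
      mul_one]
  rw [sinhMulExp_eq, sinhMulExp_eq, mul_add, mul_add, Complex.exp_add, Complex.exp_add, hshift,
    show (1 + a : ℂ) * (I * (k * π / a)) = I * (k * π * (1 + a) / a) by ring]
  ring

lemma two_mul_sinhMulExp_eq_sub_cpow (ha : 0 < 1 + a) {w : ℂ} (h0 : 0 < w.im)
    (h1 : w.im < π / (1 + a)) :
    2 * sinhMulExp a w =
      exp ((1 + a : ℝ) * w) - exp ((1 + a : ℝ) * w) ^ (((1 - a) / (1 + a) : ℝ) : ℂ) := by
  have him : ((1 + a : ℝ) * w : ℂ).im = (1 + a) * w.im := by simp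
  rw [cpow_def_of_ne_zero (exp_ne_zero _), log_exp (by rw [him]; nlinarith [pi_pos])
    (by rw [him]; exact ((lt_div_iff₀' ha).1 h1).le), sinhMulExp_eq]
  have ha' : (1 + a : ℂ) ≠ 0 := by exact_mod_cast ha.ne'
  push_cast
  rw [show (1 + a : ℂ) * w * ((1 - a) / (1 + a)) = (1 - a) * w by field_simp]
  ring

lemma strictMonoOn_sinhMulExpReal (ha0 : 0 < a) (ha1 : a < 1) :
    StrictMonoOn (sinhMulExpReal a) (Ici (1 / (2 * a) * Real.log ((1 - a) / (1 + a)))) := by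
  refine strictMonoOn_of_hasDerivWithinAt_pos (convex_Ici _)
    (fun x _ => (hasDerivAt_sinhMulExpReal a x).continuousAt.continuousWithinAt)
    (fun x _ => (hasDerivAt_sinhMulExpReal a x).hasDerivWithinAt) fun x hx => ?_
  rw [interior_Ici, mem_Ioi, one_div, inv_mul_lt_iff₀ (by positivity),
    Real.log_div (by linarith) (by linarith)] at hx
  have hlog : Real.log (1 - a) + (1 - a) * x < Real.log (1 + a) + (1 + a) * x := by linarith
  have := Real.exp_lt_exp.2 hlog
  rw [Real.exp_add, Real.exp_add, Real.exp_log (by linarith), Real.exp_log (by linarith)] at this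
  linarith

lemma sinhMulExpReal_one_div_two_mul_log (ha0 : 0 < a) (ha1 : a < 1) :
    sinhMulExpReal a (1 / (2 * a) * Real.log ((1 - a) / (1 + a))) =
      -(a / (1 + a)) * ((1 - a) / (1 + a)) ^ ((1 - a) / (2 * a)) := by
  set c := (1 - a) / (1 + a)
  have hc : 0 < c := div_pos (by linarith) (by linarith)
  have hexp : ∀ t : ℝ, Real.exp (t * (1 / (2 * a) * Real.log c)) = c ^ (t / (2 * a)) :=
    fun t => by rw [rpow_def_of_pos hc]; congr 1; ring
  rw [sinhMulExpReal_eq, hexp, hexp,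
    show (1 + a) / (2 * a) = (1 - a) / (2 * a) + 1 by field_simp; ring, rpow_add hc, rpow_one]
  have hc1 : c = 1 - 2 * (a / (1 + a)) := by simp only [c]; field_simp; ring
  linear_combination (c ^ ((1 - a) / (2 * a)) / 2) * hc1

lemma tendsto_sinhMulExpReal_atTop (ha0 : 0 < a) : Tendsto (sinhMulExpReal a) atTop atTop :=
  (Real.sinhOrderIso.tendsto_atTop.comp (tendsto_id.const_mul_atTop ha0)).atTop_mul_atTop₀
    Real.tendsto_exp_atTop

theorem bijOn_sinhMulExp_upper (ha0 : 0 < a) (ha1 : a < 1) :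
    BijOn (sinhMulExp a) {w | 0 < w.im ∧ w.im < π / (1 + a) ∧ 0 < (sinhMulExp a w).im}
      {z | 0 < z.im} := by
  have hl0 : 0 < (1 - a) / (1 + a) := div_pos (by linarith) (by linarith)
  have hl1 : (1 - a) / (1 + a) < 1 := (div_lt_one (by linarith)).2 (by linarith)
  have hE := bijOn_exp_mul_strip (c := 1 + a) (by linarith)
  have hφE := fun (w : ℂ) (hw : 0 < w.im ∧ w.im < π / (1 + a)) =>
    two_mul_sinhMulExp_eq_sub_cpow (a := a) (by linarith) hw.1 hw.2
  refine ⟨fun w hw => hw.2.2, ?_, fun z hz => ?_⟩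
  · rintro w₁ ⟨h₁, h₁', -⟩ w₂ ⟨h₂, h₂', -⟩ heq
    have hw₁ : 0 < w₁.im ∧ w₁.im < π / (1 + a) := ⟨h₁, h₁'⟩
    have hw₂ : 0 < w₂.im ∧ w₂.im < π / (1 + a) := ⟨h₂, h₂'⟩
    refine hE.injOn hw₁ hw₂ (injOn_sub_cpow hl0 hl1 (hE.mapsTo hw₁) (hE.mapsTo hw₂) ?_)
    simp only [← hφE w₁ hw₁, ← hφE w₂ hw₂, heq]
  · obtain ⟨ζ, hζ, hφζ⟩ :=
      upperHalfPlane_subset_image_sub_cpow hl0 hl1 (show 0 < (2 * z).im by simpa using hz)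
    obtain ⟨w, hw, rfl⟩ := hE.surjOn hζ
    have hwz : sinhMulExp a w = z := mul_left_cancel₀ two_ne_zero ((hφE w hw).trans hφζ)
    exact ⟨w, ⟨hw.1, hw.2, hwz ▸ hz⟩, hwz⟩

theorem bijOn_sinhMulExp_lower (ha0 : 0 < a) (ha1 : a < 1) :
    BijOn (sinhMulExp a) {w | -(π / (1 + a)) < w.im ∧ w.im < 0 ∧ (sinhMulExp a w).im < 0}
      {z | z.im < 0} := by
  have hconj : Involutive (starRingEnd ℂ) := conj_conj
  have h := (bijOn_sinhMulExp_upper ha0 ha1).image_of_comm hconj.injective (sinhMulExp_conj a)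
  rw [hconj.image_eq_preimage_symm] at h
  convert h using 1 <;> ext w
  · simp only [mem_ofPred_eq, mem_preimage, sinhMulExp_conj, conj_im, neg_pos]
    constructor <;> rintro ⟨h₁, h₂, h₃⟩ <;> exact ⟨by linarith, by linarith, h₃⟩
  · simp

theorem bijOn_sinhMulExp_real (ha0 : 0 < a) (ha1 : a < 1) :
    BijOn (sinhMulExp a) {w | w.im = 0 ∧ 1 / (2 * a) * Real.log ((1 - a) / (1 + a)) < w.re}
      {z | z.im = 0 ∧ -(a / (1 + a)) * ((1 - a) / (1 + a)) ^ ((1 - a) / (2 * a)) < z.re} := by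
  have h := (strictMonoOn_sinhMulExpReal ha0 ha1).bijOn_Ioi
    (fun x _ => (hasDerivAt_sinhMulExpReal a x).continuousAt.continuousWithinAt)
    (tendsto_sinhMulExpReal_atTop ha0)
  rw [sinhMulExpReal_one_div_two_mul_log ha0 ha1] at h
  rw [← image_ofReal_Ioi, ← image_ofReal_Ioi]
  exact h.image_of_comm ofReal_injective fun x => (ofReal_sinhMulExpReal a x).symm

theorem bijOn_sinhMulExp (ha0 : 0 < a) (ha1 : a < 1) :
    BijOn (sinhMulExp a)
      ({w : ℂ | 0 < w.im ∧ w.im < π / (1 + a) ∧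
          Real.exp ((1 - a) * w.re) * Real.sin ((1 - a) * w.im) <
            Real.exp ((1 + a) * w.re) * Real.sin ((1 + a) * w.im)} ∪
        {w : ℂ | w.im = 0 ∧ 1 / (2 * a) * Real.log ((1 - a) / (1 + a)) < w.re} ∪
        {w : ℂ | -(π / (1 + a)) < w.im ∧ w.im < 0 ∧
          Real.exp ((1 + a) * w.re) * Real.sin ((1 + a) * w.im) <
            Real.exp ((1 - a) * w.re) * Real.sin ((1 - a) * w.im)})
      {z : ℂ | ¬ (z.im = 0 ∧
        z.re ≤ -(a / (1 + a)) * ((1 - a) / (1 + a)) ^ ((1 - a) / (2 * a)))} := by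
  have htarget : ∀ x : ℝ, {z : ℂ | ¬ (z.im = 0 ∧ z.re ≤ x)} =
      {z | 0 < z.im} ∪ {z | z.im = 0 ∧ x < z.re} ∪ {z | z.im < 0} := by
    intro x; ext z
    simp only [mem_union, mem_ofPred_eq, not_and, not_le]
    rcases lt_trichotomy z.im 0 with h | h | h
    · simp [h, h.ne, h.not_gt]
    · simp [h]
    · simp [h, h.ne', h.not_gt]
  simp_rw [← im_sinhMulExp_pos_iff, ← im_sinhMulExp_neg_iff, htarget]
  refine ((bijOn_sinhMulExp_upper ha0 ha1).union_of_disjoint (bijOn_sinhMulExp_real ha0 ha1)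
    (disjoint_left.2 fun z (h₁ : 0 < z.im) h₂ => h₁.ne' h₂.1)).union_of_disjoint
    (bijOn_sinhMulExp_lower ha0 ha1) (disjoint_left.2 fun z h₁ (h₂ : z.im < 0) =>
      h₁.elim (fun h => lt_asymm h h₂) fun h => h₂.ne h.1)

end SinhMulExp

theorem stmt_13 (a : ℝ) (ha0 : 0 < a) (ha1 : a < 1)
    (f : ℂ → ℂ) (hf : ∀ w : ℂ, f w = Complex.sinh (a * w) * Complex.exp w)
    (ξa : ℝ) (hξa : ξa = (1 / (2 * a)) * Real.log ((1 - a) / (1 + a)))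
    (xa : ℝ) (hxa : xa = -(a / (1 + a)) * ((1 - a) / (1 + a)) ^ ((1 - a) / (2 * a)))
    (Ω₀ : Set ℂ)
    (hΩ₀ : Ω₀ =
      {w : ℂ | 0 < w.im ∧ w.im < Real.pi / (1 + a) ∧
          Real.exp ((1 - a) * w.re) * Real.sin ((1 - a) * w.im) <
            Real.exp ((1 + a) * w.re) * Real.sin ((1 + a) * w.im)} ∪
        {w : ℂ | w.im = 0 ∧ ξa < w.re} ∪
        {w : ℂ | -(Real.pi / (1 + a)) < w.im ∧ w.im < 0 ∧
          Real.exp ((1 + a) * w.re) * Real.sin ((1 + a) * w.im) <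
            Real.exp ((1 - a) * w.re) * Real.sin ((1 - a) * w.im)}) :
    ∀ k : ℤ,
      Set.BijOn f ((fun w => w + Complex.I * (k * Real.pi / a)) '' Ω₀)
        ((fun z => Complex.exp (Complex.I * (k * Real.pi * (1 + a) / a)) * z) ''
          {z : ℂ | ¬ (z.im = 0 ∧ z.re ≤ xa)}) := by
  intro k
  obtain rfl : f = sinhMulExp a := funext hf
  subst hξa hxa hΩ₀
  exact (bijOn_sinhMulExp ha0 ha1).image_of_comm (mul_right_injective₀ (exp_ne_zero _))
    (sinhMulExp_add_I_mul ha0.ne' k)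
end
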